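/- arXiv:2509.20616 — 7 statements merged into one kernel-verified Lean document; each statement's English description precedes it below -/
import Mathlib

section
/- Let e : Fin (n+1) → A be the unique minimal successful sequence from a state s. Then for every policy π the success probability in exactly n+1 steps from s satisfies the recursion P π (n+1) s = (π s (e 0)) · P π n (f s (e 0)); that is, it equals the probability that the policy takes the first expert action at s, multiplied by the success probability in exactly n steps from the next expert state. (This is the paper's recursion equation of the success probability, with the single-turn reward r(s,a) = 1{a equals the expert action at s} absorbed into the indicator.) -/
open scoped ENNReal BigOperators

/-- The state reached after `k` steps, starting from `s` and following the
action sequence `w : Fin m → A` through the deterministic transition `f`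
(`s_0 = s`, `s_{k+1} = f s_k (w k)`). -/
noncomputable def inducedState {S A : Type*} [Nonempty A] (f : S → A → S) (s : S) {m : ℕ}
    (w : Fin m → A) : ℕ → S
  | 0 => s
  | k + 1 => f (inducedState f s w k) (if h : k < m then w ⟨k, h⟩ else Classical.arbitrary A)

/-- An action sequence `w : Fin (n+1) → A` is successful from `s` if the success
predicate `R` holds at the last induced state-action pair. -/
def Successful {S A : Type*} [Nonempty A] (f : S → A → S) (R : S → A → Prop) (s : S) {n : ℕ}
    (w : Fin (n + 1) → A) : Prop :=
  R (inducedState f s w n) (w (Fin.last n))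

noncomputable instance {S A : Type*} [Nonempty A] (f : S → A → S) (R : S → A → Prop)
    [∀ s a, Decidable (R s a)] (s : S) {n : ℕ} (w : Fin (n + 1) → A) :
    Decidable (Successful f R s w) :=
  inferInstanceAs (Decidable (R _ _))

/-- `e : Fin (n+1) → A` is the unique minimal successful sequence from `s`:
it is successful, every successful sequence has length at least `n+1`, and any
successful sequence of length exactly `n+1` equals `e`. -/
def UniqueMinimalSuccessful {S A : Type*} [Nonempty A] (f : S → A → S) (R : S → A → Prop)
    (s : S) {n : ℕ} (e : Fin (n + 1) → A) : Prop :=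
  Successful f R s e ∧
    (∀ (m : ℕ) (w : Fin (m + 1) → A), Successful f R s w → n ≤ m) ∧
    (∀ w : Fin (n + 1) → A, Successful f R s w → w = e)

/-- Success probability in exactly `m` steps from `s` under policy `π`, with the
convention `P π 0 s = 1`:
`P π (n+1) s = ∑_{w} (∏_{k ≤ n} π s_k (w k)) · [w successful from s]`. -/
noncomputable def stepSuccessProb {S A : Type*} [Fintype A] [Nonempty A] (f : S → A → S)
    (R : S → A → Prop) [∀ s a, Decidable (R s a)] (π : S → PMF A) : ℕ → S → ℝ≥0∞
  | 0, _ => 1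
  | n + 1, s => ∑ w : Fin (n + 1) → A,
      (∏ k : Fin (n + 1), (π (inducedState f s w k.val)) (w k)) *
        (if Successful f R s w then 1 else 0)

lemma inducedState_tail {S A : Type*} [Nonempty A] (f : S → A → S) (s : S) {m : ℕ}
    (w : Fin (m + 1) → A) (k : ℕ) :
    inducedState f s w (k + 1) = inducedState f (f s (w 0)) (Fin.tail w) k := by
  induction k with
  | zero => simp [inducedState]
  | succ k ih =>
      show f (inducedState f s w (k + 1))
          (if h : k + 1 < m + 1 then w ⟨k + 1, h⟩ else Classical.arbitrary A)
        = f (inducedState f (f s (w 0)) (Fin.tail w) k)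
          (if h : k < m then Fin.tail w ⟨k, h⟩ else Classical.arbitrary A)
      rw [ih]
      congr 1
      by_cases h : k < m
      · rw [dif_pos (Nat.succ_lt_succ h), dif_pos h]
        rfl
      · rw [dif_neg (by omega), dif_neg h]

lemma successful_tail {S A : Type*} [Nonempty A] (f : S → A → S) (R : S → A → Prop)
    (s : S) {m : ℕ} (w : Fin (m + 2) → A) :
    Successful f R s w ↔ Successful f R (f s (w 0)) (Fin.tail w) := by
  unfold Successful
  rw [inducedState_tail]
  rfl

/-- Recursion equation of the success probability along the expert trajectory:
`P π (n+1) s = π s (e 0) · P π n (f s (e 0))`. -/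
theorem successProb_recursion {S A : Type*} [Fintype A] [Nonempty A]
    (f : S → A → S) (R : S → A → Prop) [∀ s a, Decidable (R s a)]
    {n : ℕ} (s : S) (e : Fin (n + 1) → A)
    (he : UniqueMinimalSuccessful f R s e) (π : S → PMF A) :
    stepSuccessProb f R π (n + 1) s =
      (π s) (e 0) * stepSuccessProb f R π n (f s (e 0)) := by
  obtain ⟨hse, hmin, huniq⟩ := he
  have hL : stepSuccessProb f R π (n + 1) s
      = ∏ k : Fin (n + 1), (π (inducedState f s e k.val)) (e k) := by
    rw [stepSuccessProb, Finset.sum_eq_single_of_mem e (Finset.mem_univ e)]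
    · rw [if_pos hse, mul_one]
    · intro w _ hw
      rw [if_neg (fun h => hw (huniq w h)), mul_zero]
  cases n with
  | zero =>
      rw [hL]
      simp [stepSuccessProb, inducedState]
  | succ m =>
      rw [hL, Fin.prod_univ_succ]
      have h0 : (π (inducedState f s e (0 : Fin (m + 1 + 1)).val)) (e 0) = (π s) (e 0) := rfl
      rw [h0]
      congr 1
      have htaile : Successful f R (f s (e 0)) (Fin.tail e) :=
        (successful_tail f R s e).mp hse
      have huniq' : ∀ w : Fin (m + 1) → A, Successful f R (f s (e 0)) w → w = Fin.tail e := by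
        intro w hw
        have hc : Successful f R s (Fin.cons (e 0) w) := by
          rw [successful_tail]
          simpa using hw
        have := huniq _ hc
        rw [← this, Fin.tail_cons]
      rw [stepSuccessProb, Finset.sum_eq_single_of_mem (Fin.tail e) (Finset.mem_univ _)]
      · rw [if_pos htaile, mul_one]
        apply Finset.prod_congr rfl
        intro k _
        rw [← inducedState_tail]
        rfl
      · intro w _ hw
        rw [if_neg (fun h => hw (huniq' w h)), mul_zero]
end

section
/- Let e : Fin (n+1) → A be the unique minimal successful sequence from a state s, with induced states s_0 = s, s_{k+1} = f s_k (e k). Then for every k ≤ n, the shifted sequence e_k : Fin (n+1−k) → A defined by e_k j = e (k + j) is the unique minimal successful sequence from the state s_k. In particular, the minimal length of a successful action sequence from s_k equals n+1−k, i.e., the minimal number of remaining turns to task completion decreases by exactly one along the expert trajectory. -/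
open scoped ENNReal BigOperators

lemma ind_congr {S A : Type*} [Nonempty A] (f : S → A → S) (s : S) {M M' : ℕ}
    (c : Fin M → A) (d : Fin M' → A) (i : ℕ) (hi : i ≤ M) (hi' : i ≤ M')
    (h : ∀ j (hj : j < i), c ⟨j, by omega⟩ = d ⟨j, by omega⟩) :
    inducedState f s c i = inducedState f s d i := by
  induction i with
  | zero => rfl
  | succ i ih =>
    simp only [inducedState]
    rw [ih (by omega) (by omega) (fun j hj => h j (by omega))]
    rw [dif_pos (by omega : i < M), dif_pos (by omega : i < M'), h i (by omega)]

lemma ind_shift {S A : Type*} [Nonempty A] (f : S → A → S) (s : S) {M M' : ℕ}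
    (c : Fin M → A) (d : Fin M' → A) (k : ℕ)
    (i : ℕ) (hi : k + i ≤ M) (hi' : i ≤ M')
    (hd : ∀ j (hj : j < i), d ⟨j, by omega⟩ = c ⟨k + j, by omega⟩) :
    inducedState f (inducedState f s c k) d i = inducedState f s c (k + i) := by
  induction i with
  | zero => rfl
  | succ i ih =>
    have : k + (i + 1) = (k + i) + 1 := by omega
    rw [this]
    simp only [inducedState]
    rw [ih (by omega) (by omega) (fun j hj => hd j (by omega))]
    rw [dif_pos (by omega : i < M'), dif_pos (by omega : k + i < M), hd i (by omega)]

/-- Along the expert trajectory, the shifted sequence `e_k j = e (k + j)` of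
length `n+1-k` is the unique minimal successful sequence from the induced state
`s_k`; in particular the minimal number of remaining turns from `s_k` is
`n+1-k`, decreasing by exactly one along the expert trajectory. -/
theorem shifted_expert_uniqueMinimal {S A : Type*} [Fintype A] [Nonempty A]
    (f : S → A → S) (R : S → A → Prop) [∀ s a, Decidable (R s a)]
    {n : ℕ} (s : S) (e : Fin (n + 1) → A)
    (he : UniqueMinimalSuccessful f R s e) {k : ℕ} (hk : k ≤ n) :
    UniqueMinimalSuccessful f R (inducedState f s e k)
      (fun j : Fin (n - k + 1) => e ⟨k + j.val, by have := j.isLt; omega⟩) := by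
  obtain ⟨he1, he2, he3⟩ := he
  set sk := inducedState f s e k with hsk
  have hkn : k + (n - k) = n := by omega
  refine ⟨?_, ?_, ?_⟩
  · -- shifted e is successful from sk
    show R _ _
    have h1 : inducedState f sk
        (fun j : Fin (n - k + 1) => e ⟨k + j.val, by have := j.isLt; omega⟩) (n - k)
        = inducedState f s e (k + (n - k)) :=
      ind_shift f s e _ k (n - k) (by omega) (by omega) (fun j hj => rfl)
    have h1' := h1.trans (congrArg (inducedState f s e) hkn)
    have hY : e ⟨k + (Fin.last (n - k)).val, by simp; omega⟩ = e (Fin.last n) := by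
      congr 1
      apply Fin.ext
      simp only [Fin.val_mk, Fin.val_last]
      omega
    rw [h1']
    have he1' : R (inducedState f s e n) (e (Fin.last n)) := he1
    convert he1' using 2
  · -- minimality
    intro m w hw
    set c : Fin (k + m + 1) → A := fun i =>
      if h : i.val < k then e ⟨i.val, by omega⟩
      else w ⟨i.val - k, by have := i.isLt; omega⟩ with hc
    have hck : inducedState f s c k = sk :=
      ind_congr f s c e k (by omega) (by omega)
        (fun j hj => by simp [hc, dif_pos hj])
    have hsh : inducedState f (inducedState f s c k) w m = inducedState f s c (k + m) :=
      ind_shift f s c w k m (by omega) (by omega)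
        (fun j hj => by
          simp only [hc]
          rw [dif_neg (by omega : ¬ k + j < k)]
          congr 1
          apply Fin.ext
          simp only [Fin.val_mk]
          omega)
    have hsucc : Successful f R s c := by
      show R _ _
      rw [← hsh, hck]
      have h2 : c (Fin.last (k + m)) = w (Fin.last m) := by
        simp only [hc, Fin.last]
        rw [dif_neg (by omega : ¬ k + m < k)]
        congr 1
        apply Fin.ext
        simp only [Fin.val_mk]
        omega
      rw [h2]
      exact hw
    have := he2 (k + m) c hsucc
    omega
  · -- uniqueness
    intro w hw
    set c : Fin (n + 1) → A := fun i =>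
      if h : i.val < k then e i
      else w ⟨i.val - k, by have := i.isLt; omega⟩ with hc
    have hck : inducedState f s c k = sk :=
      ind_congr f s c e k (by omega) (by omega)
        (fun j hj => by simp [hc, dif_pos hj])
    have hsh : inducedState f (inducedState f s c k) w (n - k) = inducedState f s c (k + (n - k)) :=
      ind_shift f s c w k (n - k) (by omega) (by omega)
        (fun j hj => by
          simp only [hc]
          rw [dif_neg (by omega : ¬ k + j < k)]
          congr 1
          apply Fin.ext
          simp only [Fin.val_mk]
          omega)
    replace hsh := hsh.trans (congrArg (inducedState f s c) hkn)
    have hsucc : Successful f R s c := by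
      show R _ _
      rw [← hsh, hck]
      have h2 : c (Fin.last n) = w (Fin.last (n - k)) := by
        simp only [hc, Fin.last]
        rw [dif_neg (by omega : ¬ n < k)]
      rw [h2]
      exact hw
    have hce : c = e := he3 c hsucc
    funext j
    have h3 : w j = c ⟨k + j.val, by have := j.isLt; omega⟩ := by
      simp only [hc]
      rw [dif_neg (by omega : ¬ k + j.val < k)]
      congr 1
      apply Fin.ext
      simp only [Fin.val_mk]
      omega
    rw [h3, hce]
end

section
/- Let e : Fin (n+1) → A be the unique minimal successful sequence from a state s, with induced states s_0 = s, s_{k+1} = f s_k (e k). Then for every k ≤ n and every action a : A with a ≠ e k, every successful action sequence from the deviated state f s_k a has length strictly greater than n − k. That is, deviating from the expert action at any step strictly increases the minimal number of remaining turns beyond one less than the remaining turns at the current expert state. -/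
open scoped ENNReal BigOperators

lemma inducedState_agree {S A : Type*} [Nonempty A] (f : S → A → S) (s : S)
    {m m' : ℕ} (w : Fin m → A) (w' : Fin m' → A) (j : ℕ)
    (h : ∀ i (h1 : i < m) (h2 : i < m'), i < j → w ⟨i, h1⟩ = w' ⟨i, h2⟩)
    (hm : j ≤ m) (hm' : j ≤ m') :
    inducedState f s w j = inducedState f s w' j := by
  induction j with
  | zero => rfl
  | succ j ih =>
    simp only [inducedState]
    rw [ih (fun i h1 h2 hi => h i h1 h2 (by omega)) (by omega) (by omega),
      dif_pos (by omega : j < m), dif_pos (by omega : j < m'),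
      h j (by omega) (by omega) (by omega)]

lemma inducedState_shift {S A : Type*} [Nonempty A] (f : S → A → S) (s : S)
    {m m' : ℕ} (w : Fin m → A) (v : Fin m' → A) (c : ℕ) (hc : c + m' ≤ m)
    (h : ∀ i (h1 : c + i < m) (h2 : i < m'), w ⟨c + i, h1⟩ = v ⟨i, h2⟩) :
    ∀ j ≤ m', inducedState f s w (c + j) = inducedState f (inducedState f s w c) v j := by
  intro j hj
  induction j with
  | zero => rfl
  | succ j ih =>
    have : c + (j + 1) = (c + j) + 1 := by omega
    rw [this]
    simp only [inducedState]
    rw [ih (by omega), dif_pos (by omega : c + j < m), dif_pos (by omega : j < m'),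
      h j (by omega) (by omega)]

/-- Deviating from the expert action at step `k` strictly increases the minimal
number of remaining turns: every successful action sequence from the deviated
state `f s_k a` (with `a ≠ e k`) has length strictly greater than `n - k`. -/
theorem deviation_increases_minimal_turns {S A : Type*} [Fintype A] [Nonempty A]
    (f : S → A → S) (R : S → A → Prop) [∀ s a, Decidable (R s a)]
    {n : ℕ} (s : S) (e : Fin (n + 1) → A)
    (he : UniqueMinimalSuccessful f R s e) {k : ℕ} (hk : k ≤ n)
    (a : A) (ha : a ≠ e ⟨k, by omega⟩) :
    ∀ (m : ℕ) (w : Fin (m + 1) → A),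
      Successful f R (f (inducedState f s e k) a) w → n - k < m + 1 := by
  intro m w hw
  by_contra hc
  -- Build the concatenated sequence: e on [0,k), then a, then w.
  set w' : Fin (k + m + 2) → A := fun i =>
    if h : (i : ℕ) < k then e ⟨i, by omega⟩
    else if (i : ℕ) = k then a
    else w ⟨(i : ℕ) - (k + 1), by omega⟩ with hw'def
  have hw'k : ∀ i (h1 : i < k + m + 2), i < k → w' ⟨i, h1⟩ = e ⟨i, by omega⟩ := by
    intro i h1 hik
    simp only [hw'def, dif_pos hik]
  have hw'a : w' ⟨k, by omega⟩ = a := by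
    simp [hw'def]
  have hw'w : ∀ i (h2 : i < m + 1), w' ⟨k + 1 + i, by omega⟩ = w ⟨i, h2⟩ := by
    intro i h2
    have h3 : ¬ (k + 1 + i < k) := by omega
    have h4 : ¬ (k + 1 + i = k) := by omega
    simp only [hw'def, dif_neg h3, if_neg h4]
    congr 1
    exact Fin.ext (by simp)
  have hstatek : inducedState f s w' k = inducedState f s e k :=
    inducedState_agree f s w' e k (fun i h1 h2 hi => by
      rw [hw'k i h1 hi]) (by omega) (by omega)
  have hstatek1 : inducedState f s w' (k + 1) = f (inducedState f s e k) a := by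
    simp only [inducedState, dif_pos (by omega : k < k + m + 2)]
    rw [hstatek, hw'a]
  have hshift := inducedState_shift f s w' w (k + 1) (by omega)
    (fun i h1 h2 => hw'w i h2) m (by omega)
  have hsucc : Successful f R s w' := by
    unfold Successful at hw ⊢
    have hlast : (k + m + 1 : ℕ) = k + 1 + m := by omega
    rw [show inducedState f s w' (k + m + 1) = inducedState f s w' (k + 1 + m) by rw [hlast],
      hshift, hstatek1]
    have hlw : w' (Fin.last (k + m + 1)) = w (Fin.last m) := by
      have : (Fin.last (k + m + 1) : Fin (k + m + 2)) = ⟨k + 1 + m, by omega⟩ := by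
        ext; simp [Fin.last]; omega
      rw [this, hw'w m (by omega)]
      rfl
    rw [hlw]
    exact hw
  have hle : n ≤ k + m + 1 := he.2.1 (k + m + 1) w' hsucc
  have hnm : n = k + m + 1 := by omega
  subst hnm
  have := he.2.2 w' hsucc
  apply ha
  rw [← this, hw'a]
end

section
/- Let e : Fin (n+1) → A be the unique minimal successful sequence from a state s, with induced states s_0 = s, s_{k+1} = f s_k (e k). Then for every policy π the success probability with the minimal number of steps factorizes as a product of the single-turn expert-action probabilities along the expert trajectory: P π (n+1) s = ∏_{k=0}^{n} π s_k (e k). -/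
open scoped ENNReal BigOperators

/-- The success probability with the minimal number of steps factorizes as the
product of the single-turn expert-action probabilities along the expert
trajectory: `P π (n+1) s = ∏_{k=0}^{n} π s_k (e k)`. -/
theorem successProb_eq_prod_expert_action_probs {S A : Type*} [Fintype A] [Nonempty A]
    (f : S → A → S) (R : S → A → Prop) [∀ s a, Decidable (R s a)]
    {n : ℕ} (s : S) (e : Fin (n + 1) → A)
    (he : UniqueMinimalSuccessful f R s e) (π : S → PMF A) :
    stepSuccessProb f R π (n + 1) s =
      ∏ k : Fin (n + 1), (π (inducedState f s e k.val)) (e k) := by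
  obtain ⟨h1, -, h3⟩ := he
  rw [stepSuccessProb]
  rw [Finset.sum_eq_single e]
  · rw [if_pos h1, mul_one]
  · intro w _ hw
    rw [if_neg fun hs => hw (h3 w hs), mul_zero]
  · intro h
    exact absurd (Finset.mem_univ e) h
end

section
/- Let e : Fin (n+1) → A be the unique minimal successful sequence from a state s, with induced states s_0 = s, s_{k+1} = f s_k (e k). Let π* and π_ref be two policies such that for every k ≤ n the probability of the expert action is at least as large under π* as under π_ref, i.e., π* s_k (e k) ≥ π_ref s_k (e k). Then the success probability with the minimal number of steps is at least as large under π* as under π_ref: P π* (n+1) s ≥ P π_ref (n+1) s. (This is the paper's theorem that GRPO single-turn improvement of the expert-action probability improves the multi-turn success probability.) -/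
open scoped ENNReal BigOperators

/-- GRPO single-turn improvement implies multi-turn improvement: if at every
state `s_k` along the expert trajectory the probability of the expert action
`e k` is at least as large under `π*` as under `π_ref`, then the success
probability with the minimal number of steps satisfies
`P π* (n+1) s ≥ P π_ref (n+1) s`. -/
theorem grpo_improves_success_probability {S A : Type*} [Fintype A] [Nonempty A]
    (f : S → A → S) (R : S → A → Prop) [∀ s a, Decidable (R s a)]
    {n : ℕ} (s : S) (e : Fin (n + 1) → A)
    (he : UniqueMinimalSuccessful f R s e) (πstar πref : S → PMF A)
    (himp : ∀ k : Fin (n + 1),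
      (πref (inducedState f s e k.val)) (e k) ≤ (πstar (inducedState f s e k.val)) (e k)) :
    stepSuccessProb f R πref (n + 1) s ≤ stepSuccessProb f R πstar (n + 1) s := by
  have key : ∀ π : S → PMF A, stepSuccessProb f R π (n + 1) s =
      ∏ k : Fin (n + 1), (π (inducedState f s e k.val)) (e k) := by
    intro π
    show (∑ w : Fin (n + 1) → A,
      (∏ k : Fin (n + 1), (π (inducedState f s w k.val)) (w k)) *
        (if Successful f R s w then 1 else 0)) = _
    rw [Finset.sum_eq_single e]
    · simp [he.1]
    · intro w _ hw
      rw [if_neg, mul_zero]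
      intro hsucc
      exact hw (he.2.2 w hsucc)
    · intro h; exact absurd (Finset.mem_univ e) h
  rw [key, key]
  exact Finset.prod_le_prod' fun k _ => himp k
end

section
/- Let e : Fin (n+1) → A be the unique minimal successful sequence from a state s for the success predicate R, with induced states s_0 = s, s_{k+1} = f s_k (e k). Let R_sub : S → A → Prop be a subtask success predicate and k* ≤ n a completion step such that the prefix e' : Fin (k*+1) → A, e' j = e j, is the unique minimal R_sub-successful sequence from s. If two policies π* and π_ref satisfy π* s_k (e k) ≥ π_ref s_k (e k) for all k ≤ k*, then the subtask success probability with the minimal number of steps is at least as large under π* as under π_ref: P_sub π* (k*+1) s ≥ P_sub π_ref (k*+1) s, where P_sub is the success probability computed with R_sub in place of R. (This is the paper's corollary that GRPO improvement on a complex task generalizes to every subtask defined by truncating the expert trajectory.) -/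
open scoped ENNReal BigOperators

/-- GRPO generalization to subtasks: if the prefix `e' j = e j` of length
`k*+1` of the expert trajectory is the unique minimal successful sequence from
`s` for the subtask predicate `R_sub`, and `π* s_k (e k) ≥ π_ref s_k (e k)` for
all `k ≤ k*`, then the subtask success probability with the minimal number of
steps satisfies `P_sub π* (k*+1) s ≥ P_sub π_ref (k*+1) s`. -/
theorem grpo_generalizes_to_subtask {S A : Type*} [Fintype A] [Nonempty A]
    (f : S → A → S) (R : S → A → Prop) [∀ s a, Decidable (R s a)]
    {n : ℕ} (s : S) (e : Fin (n + 1) → A)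
    (he : UniqueMinimalSuccessful f R s e)
    (Rsub : S → A → Prop) [∀ s a, Decidable (Rsub s a)]
    {kstar : ℕ} (hkstar : kstar ≤ n)
    (hsub : UniqueMinimalSuccessful f Rsub s
      (fun j : Fin (kstar + 1) => e ⟨j.val, by have := j.isLt; omega⟩))
    (πstar πref : S → PMF A)
    (himp : ∀ k : ℕ, (hk : k ≤ kstar) →
      (πref (inducedState f s e k)) (e ⟨k, by omega⟩) ≤
        (πstar (inducedState f s e k)) (e ⟨k, by omega⟩)) :
    stepSuccessProb f Rsub πref (kstar + 1) s ≤
      stepSuccessProb f Rsub πstar (kstar + 1) s := by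
  set e' : Fin (kstar + 1) → A := fun j => e ⟨j.val, by have := j.isLt; omega⟩ with he'
  have hind : ∀ k, k ≤ kstar → inducedState f s e' k = inducedState f s e k := by
    intro k hk
    induction k with
    | zero => rfl
    | succ k ih =>
      simp only [inducedState]
      rw [ih (by omega)]
      have h1 : k < kstar + 1 := by omega
      have h2 : k < n + 1 := by omega
      rw [dif_pos h1, dif_pos h2]
  have key : ∀ π : S → PMF A, stepSuccessProb f Rsub π (kstar + 1) s =
      ∏ k : Fin (kstar + 1), (π (inducedState f s e' k.val)) (e' k) := by
    intro π
    show (∑ w : Fin (kstar + 1) → A, _) = _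
    rw [Finset.sum_eq_single e']
    · rw [if_pos hsub.1, mul_one]
    · intro w _ hw
      have : ¬ Successful f Rsub s w := fun h => hw (hsub.2.2 w h)
      rw [if_neg this, mul_zero]
    · simp
  rw [key, key]
  apply Finset.prod_le_prod'
  intro k _
  rw [hind k.val (by omega)]
  exact himp k.val (by omega)
end

section
/- Let A be a finite nonempty type, r : A → ℝ a binary reward taking values in {0,1}, π_ref a probability mass function on A with full support, and β > 0. Write p(π) = ∑_a π(a) r(a) for the success probability of a probability mass function π on A, and KL(π‖π_ref) = ∑_a π(a) log(π(a)/π_ref(a)). Assume p_ref := p(π_ref) ∈ (0,1). Suppose π* is a probability mass function on A with p* := p(π*) ∈ (0,1) that is a fixed point of the GRPO iteration, i.e., π* maximizes over all probability mass functions π on A (with support contained in the support of π_ref) the objective G(π) = ∑_a π(a) · (r(a) − p*)/√(p*(1 − p*)) − β · KL(π‖π_ref), where the advantage normalization uses π* itself. Then the success probability is strictly amplified: p* > p_ref. -/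
open scoped BigOperators

/-- A probability mass function on a finite type, as a real-valued function
which is nonnegative and sums to one. -/
def IsPMF {A : Type*} [Fintype A] (π : A → ℝ) : Prop :=
  (∀ a, 0 ≤ π a) ∧ ∑ a, π a = 1

/-- The Kullback–Leibler divergence `KL(π‖π_ref) = ∑_a π(a) log(π(a)/π_ref(a))`
(with the convention `0 · log 0 = 0`, which holds automatically here). -/
noncomputable def klDivFin {A : Type*} [Fintype A] (π πref : A → ℝ) : ℝ :=
  ∑ a, π a * Real.log (π a / πref a)

/-!
With `u(a) = (r(a) − p*)/√(p*(1 − p*))`, the objective `⟨π, u⟩ − β KL(π‖π_ref)` takes the value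
`β log Z`, `Z = ∑_a π_ref(a) exp(u(a)/β)`, at the Gibbs distribution `π_ref · exp(u/β) / Z`.
At `π*` the advantage term vanishes (its mean is `p* − p* = 0`), so optimality of `π*` and
Gibbs' inequality give `β log Z ≤ −β KL(π*‖π_ref) ≤ 0`. Since the reward is not constant,
strict Jensen for `exp` gives `(p_ref − p*)/(β √(p*(1 − p*))) = ⟨π_ref, u/β⟩ < log Z ≤ 0`.
-/

open Finset

section

open Real InformationTheory

lemma sub_le_mul_log_div {x y : ℝ} (hx : 0 ≤ x) (hy : 0 ≤ y) (hxy : y = 0 → x = 0) :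
    x - y ≤ x * log (x / y) := by
  rcases hy.eq_or_lt with rfl | hy
  · simp [hxy rfl]
  · have h := mul_nonneg hy.le (klFun_nonneg (div_nonneg hx hy.le))
    have hkl : y * klFun (x / y) = x * log (x / y) + y - x := by
      unfold klFun
      field_simp
    linarith

lemma klDivFin_nonneg {A : Type*} [Fintype A] {μ ρ : A → ℝ} (hμ : IsPMF μ) (hρ : IsPMF ρ)
    (hsupp : ∀ a, ρ a = 0 → μ a = 0) : 0 ≤ klDivFin μ ρ := by
  have h : ∑ a, (μ a - ρ a) ≤ klDivFin μ ρ :=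
    sum_le_sum fun a _ => sub_le_mul_log_div (hμ.1 a) (hρ.1 a) (hsupp a)
  rwa [sum_sub_distrib, hμ.2, hρ.2, sub_self] at h

lemma sum_mul_sub_div {A : Type*} [Fintype A] {μ : A → ℝ} (hμ : ∑ a, μ a = 1) (r : A → ℝ)
    (p c : ℝ) : ∑ a, μ a * ((r a - p) / c) = ((∑ a, μ a * r a) - p) / c := by
  simp only [mul_div_assoc', mul_sub, ← sum_div, sum_sub_distrib, ← sum_mul, hμ, one_mul]

lemma exists_ne_of_sum_mul_mem_Ioo {A : Type*} [Fintype A] {r ρ : A → ℝ}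
    (hr : ∀ a, r a = 0 ∨ r a = 1) (hρ : ∑ a, ρ a = 1)
    (h0 : 0 < ∑ a, ρ a * r a) (h1 : ∑ a, ρ a * r a < 1) : ∃ j k, r j ≠ r k := by
  obtain ⟨j, hj⟩ : ∃ j, r j = 0 := by
    by_contra! h
    simp [fun a => (hr a).resolve_left (h a), hρ] at h1
  obtain ⟨k, hk⟩ : ∃ k, r k = 1 := by
    by_contra! h
    simp [fun a => (hr a).resolve_right (h a)] at h0
  exact ⟨j, k, by rw [hj, hk]; exact zero_ne_one⟩

section Gibbs

variable {A : Type*} [Fintype A] {ρ : A → ℝ}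

noncomputable def partitionFn (ρ f : A → ℝ) : ℝ := ∑ a, ρ a * exp (f a)

noncomputable def gibbs (ρ f : A → ℝ) (a : A) : ℝ := ρ a * exp (f a) / partitionFn ρ f

lemma partitionFn_pos [Nonempty A] (hρ : ∀ a, 0 < ρ a) (f : A → ℝ) : 0 < partitionFn ρ f :=
  sum_pos (fun a _ => mul_pos (hρ a) (exp_pos _)) univ_nonempty

lemma isPMF_gibbs [Nonempty A] (hρ : ∀ a, 0 < ρ a) (f : A → ℝ) : IsPMF (gibbs ρ f) := by
  have hZ := partitionFn_pos hρ f
  refine ⟨fun a => div_nonneg (mul_pos (hρ a) (exp_pos _)).le hZ.le, ?_⟩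
  rw [← div_self hZ.ne', partitionFn, sum_div]
  rfl

lemma klDivFin_gibbs [Nonempty A] (hρ : ∀ a, 0 < ρ a) (f : A → ℝ) :
    klDivFin (gibbs ρ f) ρ = ∑ a, gibbs ρ f a * f a - log (partitionFn ρ f) := by
  have hZ := partitionFn_pos hρ f
  have hlog : ∀ a, log (gibbs ρ f a / ρ a) = f a - log (partitionFn ρ f) := fun a => by
    rw [gibbs, div_right_comm, mul_div_cancel_left₀ _ (hρ a).ne',
      log_div (exp_ne_zero _) hZ.ne', log_exp]
  simp only [klDivFin, hlog, mul_sub, sum_sub_distrib, ← sum_mul, (isPMF_gibbs hρ f).2, one_mul]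

lemma sum_mul_lt_log_partitionFn [Nonempty A] (hρ : ∀ a, 0 < ρ a) (hρ₁ : ∑ a, ρ a = 1) {f : A → ℝ}
    (hf : ∃ j k, f j ≠ f k) : ∑ a, ρ a * f a < log (partitionFn ρ f) := by
  obtain ⟨j, k, hjk⟩ := hf
  rw [lt_log_iff_exp_lt (partitionFn_pos hρ f)]
  simpa only [smul_eq_mul, partitionFn] using strictConvexOn_exp.map_sum_lt (fun a _ => hρ a) hρ₁
    (fun a _ => Set.mem_univ (f a)) ⟨j, mem_univ j, k, mem_univ k, hjk⟩

end Gibbs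

end

/-- GRPO success amplification: if `π*` (with success probability
`p* ∈ (0,1)`) maximizes the KL-regularized group-relative-advantage objective
`G(π) = ∑_a π(a)·(r(a) − p*)/√(p*(1−p*)) − β·KL(π‖π_ref)` over all pmfs `π`
with support contained in the support of the full-support reference pmf
`π_ref`, where `r` is a binary reward and `p_ref ∈ (0,1)`, then the success
probability is strictly amplified: `p* > p_ref`. -/
theorem grpo_success_amplification {A : Type*} [Fintype A] [Nonempty A]
    (r : A → ℝ) (hr : ∀ a, r a = 0 ∨ r a = 1)
    (πref : A → ℝ) (href : IsPMF πref) (hfull : ∀ a, 0 < πref a)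
    (β : ℝ) (hβ : 0 < β)
    (πstar : A → ℝ) (hstar : IsPMF πstar)
    (pref pstar : ℝ)
    (hpref : pref = ∑ a, πref a * r a)
    (hpstar : pstar = ∑ a, πstar a * r a)
    (hpref01 : 0 < pref ∧ pref < 1)
    (hpstar01 : 0 < pstar ∧ pstar < 1)
    (hfix : ∀ π : A → ℝ, IsPMF π → (∀ a, πref a = 0 → π a = 0) →
      (∑ a, π a * ((r a - pstar) / Real.sqrt (pstar * (1 - pstar)))) -
          β * klDivFin π πref ≤
        (∑ a, πstar a * ((r a - pstar) / Real.sqrt (pstar * (1 - pstar)))) -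
          β * klDivFin πstar πref) :
    pref < pstar := by
  set s := Real.sqrt (pstar * (1 - pstar))
  have hs : 0 < s := Real.sqrt_pos.mpr (by nlinarith)
  set f : A → ℝ := fun a => (r a - pstar) / (s * β)
  have hsupp : ∀ (μ : A → ℝ) a, πref a = 0 → μ a = 0 := fun _ a h => absurd h (hfull a).ne'
  have hlogZ : Real.log (partitionFn πref f) ≤ 0 := by
    have hopt := hfix _ (isPMF_gibbs hfull f) (hsupp _)
    have hgibbs : ∑ a, gibbs πref f a * ((r a - pstar) / s) = β * ∑ a, gibbs πref f a * f a := by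
      rw [mul_sum]
      refine sum_congr rfl fun a _ => ?_
      simp only [f]
      field_simp
    rw [klDivFin_gibbs hfull, hgibbs, sum_mul_sub_div hstar.2, ← hpstar, sub_self, zero_div] at hopt
    nlinarith [klDivFin_nonneg hstar href (hsupp πstar)]
  obtain ⟨j, k, hjk⟩ := exists_ne_of_sum_mul_mem_Ioo hr href.2
    (hpref ▸ hpref01.1) (hpref ▸ hpref01.2)
  have hf : f j ≠ f k := fun h =>
    hjk (sub_left_inj.mp ((div_left_inj' (mul_pos hs hβ).ne').mp h))
  have hJensen := sum_mul_lt_log_partitionFn hfull href.2 ⟨j, k, hf⟩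
  rw [sum_mul_sub_div href.2, ← hpref] at hJensen
  have hneg := hJensen.trans_le hlogZ
  rw [div_lt_iff₀ (mul_pos hs hβ), zero_mul] at hneg
  linarith
end
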